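/- arXiv:2411.05124 — 2 statements merged into one kernel-verified Lean document; each statement's English description precedes it below -/
import Mathlib

section
/- Fix M > 0, ℓ ∈ (2√3 M, 4M), and let r_- = r_-(ℓ) satisfy r_-² − (ℓ²/M) r_- + 3ℓ² = 0 with 4M < r_- < 6M, E_-(ℓ)² = V_ℓ(r_-), and a(ℓ) = 2M² r_-³/(ℓ²(4M − r_-)(r_- − 3M)). Suppose E ∈ (0,1) and p, r > 2M satisfy the mass-shell relation E² = p² + V_ℓ(r), where V_ℓ(r) = (1 − 2M/r)(1 + ℓ²/r²). Then 2M/(1 − E²) − 2M/(1 − E_-(ℓ)²) = (r³/(r² − (ℓ²/(2M)) r + ℓ²)) · ( p²/(1 − E²) + (1 + a(ℓ)/r)(1 − r_- /r)² ). -/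
/-!
Writing `V = V_ℓ`, one has `1 - V(r) = 2M Q(r) / r³` with `Q(r) = r² - (ℓ²/(2M)) r + ℓ²`, so the
prefactor `r³ / Q(r)` is `2M / (1 - V(r))`. Since `r₋` is a critical point of `V`, the cubic
`V(r) - E₋²` in `1/r` has a double root at `1/r₋` and factors as `(1 - E₋²)(1 + a/r)(1 - r₋/r)²`.
With `1 - E² = (1 - V(r)) - p²` the identity is then a partial-fraction rearrangement.
-/

noncomputable def effPotential (M ℓ r : ℝ) : ℝ := (1 - 2 * M / r) * (1 + ℓ ^ 2 / r ^ 2)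

section EffPotential

variable {M ℓ rm r : ℝ}

theorem one_sub_effPotential (hM : M ≠ 0) (hr : r ≠ 0) :
    1 - effPotential M ℓ r = 2 * M * (r ^ 2 - ℓ ^ 2 / (2 * M) * r + ℓ ^ 2) / r ^ 3 := by
  unfold effPotential
  field_simp
  ring

theorem orbit_quadratic_pos (hM : M ≠ 0) (hℓ : ℓ ≠ 0) (hℓM : ℓ ^ 2 < 16 * M ^ 2) (r : ℝ) :
    0 < r ^ 2 - ℓ ^ 2 / (2 * M) * r + ℓ ^ 2 := by
  have hsq : r ^ 2 - ℓ ^ 2 / (2 * M) * r + ℓ ^ 2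
      = ((4 * M * r - ℓ ^ 2) ^ 2 + ℓ ^ 2 * (16 * M ^ 2 - ℓ ^ 2)) / (16 * M ^ 2) := by
    field_simp
    ring
  have : 0 < ℓ ^ 2 * (16 * M ^ 2 - ℓ ^ 2) := mul_pos (by positivity) (by linarith)
  rw [hsq]
  positivity

theorem circular_relation_of_root (hM : M ≠ 0)
    (hroot : rm ^ 2 - (ℓ ^ 2 / M) * rm + 3 * ℓ ^ 2 = 0) :
    ℓ ^ 2 * (rm - 3 * M) = M * rm ^ 2 := by
  field_simp at hroot
  linear_combination -hroot

variable (hcirc : ℓ ^ 2 * (rm - 3 * M) = M * rm ^ 2) (hrm : rm ≠ 0) (h3 : rm ≠ 3 * M)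
include hcirc hrm h3

theorem one_sub_effPotential_circular :
    1 - effPotential M ℓ rm = M * (rm - 4 * M) / (rm * (rm - 3 * M)) := by
  -- `field_simp` looks for side conditions only after normalizing `3 * M` to `M * 3`
  have : rm - M * 3 ≠ 0 := sub_ne_zero.2 (by rwa [mul_comm])
  unfold effPotential
  field_simp
  linear_combination (2 * M - rm) * hcirc

theorem effPotential_sub_circular (h4 : rm ≠ 4 * M) (hr : r ≠ 0) :
    effPotential M ℓ r - effPotential M ℓ rm = (1 - effPotential M ℓ rm) *
      ((1 + (2 * M ^ 2 * rm ^ 3 / (ℓ ^ 2 * (4 * M - rm) * (rm - 3 * M))) / r) *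
        (1 - rm / r) ^ 2) := by
  have : rm - M * 3 ≠ 0 := sub_ne_zero.2 (by rwa [mul_comm])
  have : M * 4 - rm ≠ 0 := sub_ne_zero.2 (by rw [mul_comm]; exact h4.symm)
  have hℓ : ℓ ^ 2 = M * rm ^ 2 / (rm - 3 * M) := by
    rw [eq_div_iff (sub_ne_zero.2 h3)]
    exact hcirc
  rw [one_sub_effPotential_circular hcirc hrm h3]
  unfold effPotential
  rw [hℓ]
  field_simp
  ring

end EffPotential

theorem div_sub_div_eq_div_mul_add {c u K q f : ℝ} (hq : u - q ≠ 0) (hu : u ≠ 0) (hK : K ≠ 0)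
    (hf : K - u = K * f) :
    c / (u - q) - c / K = c / u * (q / (u - q) + f) := by
  field_simp
  linear_combination (c * (u - q)) * hf

theorem factorized_mass_shell_identity_general
    (M ℓ rm Em E p r : ℝ) (hM : 0 < M)
    (hl1 : 2 * Real.sqrt 3 * M < ℓ) (hl2 : ℓ < 4 * M)
    (hroot : rm ^ 2 - (ℓ ^ 2 / M) * rm + 3 * ℓ ^ 2 = 0)
    (hrm1 : 4 * M < rm)
    (hEm : Em ^ 2 = (1 - 2 * M / rm) * (1 + ℓ ^ 2 / rm ^ 2))
    (hE0 : 0 < E) (hE1 : E < 1) (hr : 2 * M < r)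
    (hms : E ^ 2 = p ^ 2 + (1 - 2 * M / r) * (1 + ℓ ^ 2 / r ^ 2)) :
    2 * M / (1 - E ^ 2) - 2 * M / (1 - Em ^ 2)
      = r ^ 3 / (r ^ 2 - ℓ ^ 2 / (2 * M) * r + ℓ ^ 2) *
          (p ^ 2 / (1 - E ^ 2) +
            (1 + (2 * M ^ 2 * rm ^ 3 / (ℓ ^ 2 * (4 * M - rm) * (rm - 3 * M))) / r) *
              (1 - rm / r) ^ 2) := by
  have hℓ : 0 < ℓ := lt_trans (by positivity) hl1
  have hr0 : r ≠ 0 := by linarith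
  have hrm0 : rm ≠ 0 := by linarith
  have h3 : rm ≠ 3 * M := by linarith
  have hcirc := circular_relation_of_root hM.ne' hroot
  have hQ := orbit_quadratic_pos hM.ne' hℓ.ne' (by nlinarith) r
  have hu := one_sub_effPotential (ℓ := ℓ) hM.ne' hr0
  have hE2 : 0 < 1 - E ^ 2 := by nlinarith
  have hK : 0 < 1 - Em ^ 2 := by
    rw [hEm, ← effPotential, one_sub_effPotential_circular hcirc hrm0 h3]
    exact div_pos (mul_pos hM (by linarith)) (mul_pos (by linarith) (by linarith))
  have hE : 1 - E ^ 2 = (1 - effPotential M ℓ r) - p ^ 2 := by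
    rw [hms, effPotential]
    ring
  have hprefactor : r ^ 3 / (r ^ 2 - ℓ ^ 2 / (2 * M) * r + ℓ ^ 2)
      = 2 * M / (1 - effPotential M ℓ r) := by
    rw [hu]
    field_simp
  rw [hprefactor, hE]
  refine div_sub_div_eq_div_mul_add (hE ▸ hE2.ne') (by rw [hu]; positivity) hK.ne' ?_
  rw [hEm, ← effPotential]
  linear_combination effPotential_sub_circular hcirc hrm0 h3 hrm1.ne' hr0

/-- the factorized mass-shell identity for the conserved quantity
`H_ℓ(E) = 2M/(1−E²) − 2M/(1−E_-(ℓ)²)` when `ℓ ∈ (2√3 M, 4M)`. -/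
theorem factorized_mass_shell_identity
    (M ℓ rm Em E p r : ℝ) (hM : 0 < M)
    (hl1 : 2 * Real.sqrt 3 * M < ℓ) (hl2 : ℓ < 4 * M)
    (hroot : rm ^ 2 - (ℓ ^ 2 / M) * rm + 3 * ℓ ^ 2 = 0)
    (hrm1 : 4 * M < rm) (hrm2 : rm < 6 * M)
    (hEm : Em ^ 2 = (1 - 2 * M / rm) * (1 + ℓ ^ 2 / rm ^ 2))
    (hE0 : 0 < E) (hE1 : E < 1) (hp : 2 * M < p) (hr : 2 * M < r)
    (hms : E ^ 2 = p ^ 2 + (1 - 2 * M / r) * (1 + ℓ ^ 2 / r ^ 2)) :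
    2 * M / (1 - E ^ 2) - 2 * M / (1 - Em ^ 2)
      = r ^ 3 / (r ^ 2 - ℓ ^ 2 / (2 * M) * r + ℓ ^ 2) *
          (p ^ 2 / (1 - E ^ 2) +
            (1 + (2 * M ^ 2 * rm ^ 3 / (ℓ ^ 2 * (4 * M - rm) * (rm - 3 * M))) / r) *
              (1 - rm / r) ^ 2) :=
  factorized_mass_shell_identity_general M ℓ rm Em E p r hM hl1 hl2 hroot hrm1 hEm hE0 hE1 hr hms
end

section
/- Fix M > 0 and consider the planar ODE system dr/ds = p, dp/ds = −(M/r⁴)(r − 4M)(r − 12M) on the domain r > 2M (the radial geodesic flow with angular momentum ℓ = 4M). Define ψ_±(r, p) = p ± (√(2M)/√r)(1 − 4M/r). Then along any solution, d/ds ψ_±(r(s), p(s)) = ∓ (√(2M)/(2 r(s)^{3/2})) (1 − 12M/r(s)) ψ_±(r(s), p(s)). -/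
/-! With `f r = √(2M)/√r · (1 - 4M/r)` one has `f · f' = -(M/r⁴)(r - 4M)(r - 12M)`, i.e. the
acceleration is the derivative of `f²/2`. For any equation `r' = p, p' = f(r) f'(r)` and `ε² = 1`,
the chain rule gives `(p + ε f(r))' = f f' + ε f' p = ε f'(r) (p + ε f(r))`, and here
`f' r = -(√(2M)/(2 r^{3/2}))(1 - 12M/r)`. -/

open Real

theorem hasDerivAt_add_mul_comp_of_sq_eq_one {𝕜 : Type*} [NontriviallyNormedField 𝕜]
    {r p f f' : 𝕜 → 𝕜} {ε s : 𝕜} (hε : ε ^ 2 = 1) (hr : HasDerivAt r (p s) s)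
    (hp : HasDerivAt p (f (r s) * f' (r s)) s) (hf : HasDerivAt f (f' (r s)) (r s)) :
    HasDerivAt (fun s => p s + ε * f (r s)) (ε * f' (r s) * (p s + ε * f (r s))) s :=
  (hp.add ((hf.comp s hr).const_mul ε)).congr_deriv <| by
    linear_combination -(f (r s) * f' (r s)) * hε

theorem Real.rpow_three_halves_eq_mul_sqrt {x : ℝ} (hx : 0 ≤ x) : x ^ ((3 : ℝ) / 2) = x * √x := by
  rw [rpow_div_two_eq_sqrt 3 hx, show (3 : ℝ) = (3 : ℕ) by norm_num, rpow_natCast, pow_succ,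
    sq_sqrt hx]

theorem hasDerivAt_div_sqrt_mul_one_sub_div (c M : ℝ) {x : ℝ} (hx : 0 < x) :
    HasDerivAt (fun x => c / √x * (1 - 4 * M / x))
      (-(c / (2 * x ^ ((3 : ℝ) / 2))) * (1 - 12 * M / x)) x := by
  have hsqrt : 0 < √x := sqrt_pos.mpr hx
  refine (((hasDerivAt_const x c).div (hasDerivAt_sqrt hx.ne') hsqrt.ne').mul
    (((hasDerivAt_const x (4 * M)).div (hasDerivAt_id x) hx.ne').const_sub 1)).congr_deriv ?_
  simp only [Pi.div_apply, id, rpow_three_halves_eq_mul_sqrt hx.le]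
  field_simp
  rw [sq_sqrt hx.le]
  ring

theorem div_sqrt_mul_one_sub_div_mul_deriv {M x : ℝ} (hM : 0 ≤ M) (hx : 0 < x) :
    √(2 * M) / √x * (1 - 4 * M / x) * (-(√(2 * M) / (2 * x ^ ((3 : ℝ) / 2))) * (1 - 12 * M / x))
      = -(M / x ^ 4) * (x - 4 * M) * (x - 12 * M) := by
  have hsqrt : 0 < √x := sqrt_pos.mpr hx
  rw [rpow_three_halves_eq_mul_sqrt hx.le]
  field_simp
  rw [sq_sqrt hx.le, sq_sqrt (by positivity)]

/-- evolution of the defining functions `ψ_±` of the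
stable/unstable manifolds of the fixed point `(4M, 0)` of the radial flow
with angular momentum `ℓ = 4M`. -/
theorem psi_evolution_four_M
    (M : ℝ) (hM : 0 < M) (r p : ℝ → ℝ)
    (hr : ∀ s, 2 * M < r s)
    (hr' : ∀ s, HasDerivAt r (p s) s)
    (hp' : ∀ s, HasDerivAt p (-(M / (r s) ^ 4) * (r s - 4 * M) * (r s - 12 * M)) s)
    (ε : ℝ) (hε : ε = 1 ∨ ε = -1) (s : ℝ) :
    HasDerivAt
      (fun s => p s + ε * (Real.sqrt (2 * M) / Real.sqrt (r s)) * (1 - 4 * M / r s))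
      (-ε * (Real.sqrt (2 * M) / (2 * (r s) ^ ((3 : ℝ) / 2))) * (1 - 12 * M / r s) *
        (p s + ε * (Real.sqrt (2 * M) / Real.sqrt (r s)) * (1 - 4 * M / r s))) s := by
  have hrs : 0 < r s := by linarith [hr s]
  have hε2 : ε ^ 2 = 1 := by rcases hε with rfl | rfl <;> norm_num
  have hp : HasDerivAt p (√(2 * M) / √(r s) * (1 - 4 * M / r s) *
      (-(√(2 * M) / (2 * r s ^ ((3 : ℝ) / 2))) * (1 - 12 * M / r s))) s := by
    rw [div_sqrt_mul_one_sub_div_mul_deriv hM.le hrs]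
    exact hp' s
  have h := hasDerivAt_add_mul_comp_of_sq_eq_one hε2 (hr' s) hp
    (f' := fun x => -(√(2 * M) / (2 * x ^ ((3 : ℝ) / 2))) * (1 - 12 * M / x))
    (hasDerivAt_div_sqrt_mul_one_sub_div (√(2 * M)) M hrs)
  simp only [← mul_assoc] at h
  exact h.congr_deriv (by ring)
end
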